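/- (Graves–Heisenberg–Weyl normal ordering, eq. (27).) On the polynomial ring K[X], let D_q be the Jackson q-derivative, i.e. the K-linear endomorphism with D_q(X^m) = [m]_q·X^{m-1} for m ≥ 1 and D_q(1) = 0, and let M be multiplication by X. Then for every natural number n, (M ∘ D_q)^n = Σ_{k=0}^{n} S_q(n,k) · (M^k ∘ D_q^k) as K-linear endomorphisms of K[X]. -/

import Mathlib

/-- The q-integer `[m]_q = Σ_{i=0}^{m-1} q^i`. -/
def qInt {K : Type*} [CommRing K] (q : K) (m : ℕ) : K :=
  ∑ i ∈ Finset.range m, q ^ i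

/-- The Carlitz–Gould q-Stirling numbers of the second kind. -/
def qStirling {K : Type*} [CommRing K] (q : K) : ℕ → ℕ → K
  | 0, 0 => 1
  | 0, _ + 1 => 0
  | _ + 1, 0 => 0
  | n + 1, k + 1 => q ^ k * qStirling q n k + qInt q (k + 1) * qStirling q n (k + 1)

/-- q-falling factorial `[m][m-1]⋯[m-k+1]`. -/
def ffq {K : Type*} [CommRing K] (q : K) (m k : ℕ) : K :=
  ∏ i ∈ Finset.range k, qInt q (m - i)

section lemmas
variable {K : Type*} [CommRing K] (q : K)

lemma qInt_zero : qInt q 0 = 0 := by simp [qInt]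

lemma qInt_split {k m : ℕ} (h : k ≤ m) :
    qInt q m = qInt q k + q ^ k * qInt q (m - k) := by
  have : m = k + (m - k) := by omega
  rw [qInt, this, Finset.sum_range_add]
  simp [qInt, pow_add, Finset.mul_sum]

lemma ffq_succ (m k : ℕ) : ffq q m (k + 1) = ffq q m k * qInt q (m - k) := by
  simp [ffq, Finset.prod_range_succ]

lemma ffq_zero (m : ℕ) : ffq q m 0 = 1 := by simp [ffq]

lemma ffq_eq_zero {m k : ℕ} (h : m < k) : ffq q m k = 0 := by
  apply Finset.prod_eq_zero (i := m) (by simpa [Finset.mem_range])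
  simp [qInt_zero]

lemma ffq_mul_qInt (m k : ℕ) :
    ffq q m k * qInt q m = qInt q k * ffq q m k + q ^ k * ffq q m (k + 1) := by
  rcases le_or_gt k m with h | h
  · rw [ffq_succ, qInt_split q h]; ring
  · rw [ffq_eq_zero q h, ffq_eq_zero q (by omega)]; ring

lemma qStirling_eq_zero : ∀ n k : ℕ, n < k → qStirling q n k = 0 := by
  intro n
  induction n with
  | zero => intro k hk; match k, hk with
    | k + 1, _ => rfl
  | succ n ih =>
    intro k hk
    match k, hk with
    | k + 1, hk =>
      show q ^ k * qStirling q n k + qInt q (k + 1) * qStirling q n (k + 1) = 0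
      rw [ih k (by omega), ih (k + 1) (by omega)]; ring

/-- The key scalar identity: `[m]^n = Σ_k S(n,k)·[m]↓k`. -/
lemma key (m : ℕ) : ∀ n : ℕ,
    qInt q m ^ n = ∑ k ∈ Finset.range (n + 1), qStirling q n k * ffq q m k := by
  intro n
  induction n with
  | zero => simp [qStirling, ffq]
  | succ n ih =>
    rw [pow_succ, ih, Finset.sum_mul]
    have lhs : ∑ k ∈ Finset.range (n + 1), qStirling q n k * ffq q m k * qInt q m
        = (∑ k ∈ Finset.range (n + 1), q ^ k * qStirling q n k * ffq q m (k + 1))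
          + ∑ k ∈ Finset.range (n + 1), qStirling q n k * (qInt q k * ffq q m k) := by
      rw [← Finset.sum_add_distrib]
      apply Finset.sum_congr rfl
      intro k _
      rw [mul_assoc, ffq_mul_qInt]; ring
    rw [lhs]
    rw [Finset.sum_range_succ' (fun k => qStirling q (n + 1) k * ffq q m k)]
    have h0 : qStirling q (n + 1) 0 * ffq q m 0 = 0 := by
      simp [show qStirling q (n+1) 0 = 0 from rfl]
    rw [h0, add_zero]
    have hrec : ∀ k, qStirling q (n + 1) (k + 1) * ffq q m (k + 1)
        = q ^ k * qStirling q n k * ffq q m (k + 1)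
          + qInt q (k + 1) * qStirling q n (k + 1) * ffq q m (k + 1) := by
      intro k
      show (q ^ k * qStirling q n k + qInt q (k + 1) * qStirling q n (k + 1)) * _ = _
      ring
    rw [Finset.sum_congr rfl (fun k _ => hrec k), Finset.sum_add_distrib]
    congr 1
    · -- Σ_{k<n+1} S(n,k) [k] ff m k = Σ_{k<n+1} [k+1] S(n,k+1) ff m (k+1)
      rw [Finset.sum_range_succ' (fun k => qStirling q n k * (qInt q k * ffq q m k))]
      simp only [qInt_zero, mul_zero, zero_mul, add_zero]
      rw [Finset.sum_range_succ (fun k => qInt q (k + 1) * qStirling q n (k + 1) * ffq q m (k + 1))]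
      rw [qStirling_eq_zero q n (n + 1) (by omega)]
      simp only [zero_mul, mul_zero, add_zero]
      apply Finset.sum_congr rfl
      intro k _; ring

end lemmas

theorem ghw_normal_ordering {K : Type*} [CommRing K] (q : K)
    (Dq : Module.End K (Polynomial K))
    (hD0 : Dq 1 = 0)
    (hD : ∀ m : ℕ, 1 ≤ m →
      Dq (Polynomial.X ^ m) = Polynomial.C (qInt q m) * Polynomial.X ^ (m - 1))
    (n : ℕ) :
    ((LinearMap.mulLeft K (Polynomial.X : Polynomial K)) * Dq) ^ n =
      ∑ k ∈ Finset.range (n + 1), qStirling q n k •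
        (((LinearMap.mulLeft K (Polynomial.X : Polynomial K)) ^ k) * Dq ^ k) := by
  set M := LinearMap.mulLeft K (Polynomial.X : Polynomial K) with hM
  -- (M*Dq) on X^m
  have hMD : ∀ m : ℕ, (M * Dq) (Polynomial.X ^ m) = qInt q m • Polynomial.X ^ m := by
    intro m
    rcases Nat.eq_zero_or_pos m with rfl | hm
    · simp [Module.End.mul_apply, hD0, qInt_zero, hM]
    · rw [Module.End.mul_apply, hD m hm, hM]
      simp only [LinearMap.mulLeft_apply]
      rw [Polynomial.smul_eq_C_mul]
      rw [show (Polynomial.X : Polynomial K) * (Polynomial.C (qInt q m) * Polynomial.X ^ (m-1))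
        = Polynomial.C (qInt q m) * (Polynomial.X * Polynomial.X ^ (m-1)) by ring]
      rw [← pow_succ']
      congr 2
      omega
  have hMDpow : ∀ n m : ℕ, ((M * Dq) ^ n) (Polynomial.X ^ m)
      = qInt q m ^ n • Polynomial.X ^ m := by
    intro n
    induction n with
    | zero => intro m; simp
    | succ n ih =>
      intro m
      rw [pow_succ, Module.End.mul_apply, hMD, map_smul, ih, pow_succ]
      rw [smul_smul, mul_comm]
  have hDqpow : ∀ k m : ℕ, (Dq ^ k) (Polynomial.X ^ m)
      = ffq q m k • Polynomial.X ^ (m - k) := by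
    intro k
    induction k with
    | zero => intro m; simp [ffq_zero]
    | succ k ih =>
      intro m
      rw [pow_succ', Module.End.mul_apply, ih, map_smul]
      rcases le_or_gt (k + 1) m with h | h
      · rw [hD (m - k) (by omega), ffq_succ, ← smul_smul, Polynomial.smul_eq_C_mul,
          show m - k - 1 = m - (k + 1) by omega]
        simp [Polynomial.smul_eq_C_mul, mul_assoc]
      · rcases le_or_gt m k with h' | h'
        · have : m - k = 0 := by omega
          rw [this, pow_zero, hD0, smul_zero]
          rw [ffq_eq_zero q (show m < k + 1 by omega), zero_smul]
        · omega
  have hMpow : ∀ k : ℕ, (M ^ k : Module.End K (Polynomial K))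
      = LinearMap.mulLeft K ((Polynomial.X : Polynomial K) ^ k) := by
    intro k
    rw [hM, LinearMap.pow_mulLeft]
  -- now prove equality of endomorphisms
  apply LinearMap.ext
  intro p
  induction p using Polynomial.induction_on' with
  | add p r hp hr => simp only [map_add, hp, hr]
  | monomial m a =>
    rw [← Polynomial.smul_X_eq_monomial, map_smul, map_smul]
    congr 1
    rw [hMDpow]
    rw [LinearMap.sum_apply]
    have hterm : ∀ k, (qStirling q n k • (M ^ k * Dq ^ k)) (Polynomial.X ^ m)
        = (qStirling q n k * ffq q m k) • Polynomial.X ^ m := by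
      intro k
      rw [LinearMap.smul_apply, Module.End.mul_apply, hDqpow, map_smul, hMpow]
      simp only [LinearMap.mulLeft_apply]
      rcases le_or_gt k m with h | h
      · rw [← pow_add, show k + (m - k) = m by omega, smul_smul]
      · simp [ffq_eq_zero q h]
    rw [Finset.sum_congr rfl (fun k _ => hterm k), ← Finset.sum_smul, ← key]
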